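/- arXiv:1811.11556 — 4 statements merged into one kernel-verified Lean document; each statement's English description precedes it below -/
import Mathlib

section
/- Let m ≥ 1 and n ≥ 0 be integers, and let A be an n × n matrix over a commutative ring. Then ∑_{f : {1,…,n} → {1,…,m}} ∏_{c=1}^{m} det(A[f⁻¹(c)]) = ∑_{σ ∈ S_n} (−1)^{n − m(σ)} m^{m(σ)} ∏_{i=1}^n A_{σ(i), i}, where A[S] denotes the principal submatrix of A with rows and columns indexed by S (with det of the empty matrix equal to 1), and m(σ) is the number of cycles of σ. Over ℝ the right-hand side equals m^n · det_{−1/m} A; this identity expresses that the α-determinantal process with α = −1/m and kernel K is the superposition of m i.i.d. determinantal processes with kernel K/m. -/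
/-- The setoid on `Fin n` whose classes are the cycles (orbits) of a permutation `σ`,
counting fixed points as singleton orbits. -/
def sameCycleSetoid {n : ℕ} (σ : Equiv.Perm (Fin n)) : Setoid (Fin n) :=
  ⟨σ.SameCycle, ⟨fun x => Equiv.Perm.SameCycle.refl σ x,
    fun h => h.symm, fun h h' => h.trans h'⟩⟩

/-- `cycleCount σ` is the number of cycles `m(σ)` of the permutation `σ`. -/
noncomputable def cycleCount {n : ℕ} (σ : Equiv.Perm (Fin n)) : ℕ :=
  Nat.card (Quotient (sameCycleSetoid σ))

/-- The `α`-determinant of an `n × n` real matrix: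
`det_α A = ∑_{σ ∈ S_n} α^(n - m(σ)) ∏_i A_{σ(i), i}`. -/
noncomputable def adet {n : ℕ} (α : ℝ) (A : Matrix (Fin n) (Fin n) ℝ) : ℝ :=
  ∑ σ : Equiv.Perm (Fin n), α ^ (n - cycleCount σ) * ∏ i, A (σ i) i

/-!
Masking `A` by a colouring `f` (zeroing the entries between different colours) gives a
block-diagonal matrix, whose determinant is the product of the principal minors over the
colour classes and whose Leibniz expansion keeps exactly the permutations `σ` with
`f ∘ σ = f`. Exchanging the two sums, each `σ` is counted once for every colouring constant on
its cycles, that is `m ^ m(σ)` times, and `sign σ = (-1) ^ (n - m(σ))` because the cycles of `σ`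
are its fixed points together with its cycle factors. Over `ℝ` the second identity is termwise
`m ^ n (-1/m) ^ (n - m(σ)) = (-1) ^ (n - m(σ)) m ^ m(σ)`.
-/

open Finset Equiv

namespace Matrix

variable {ι α R : Type*} [DecidableEq α]

def fiberMask [Zero R] (f : ι → α) (A : Matrix ι ι R) : Matrix ι ι R :=
  of fun i j => if f i = f j then A i j else 0

theorem blockTriangular_fiberMask [Zero R] [LinearOrder α] (f : ι → α) (A : Matrix ι ι R) :
    (fiberMask f A).BlockTriangular f :=
  fun _ _ h => if_neg h.ne'

variable [Fintype ι] [DecidableEq ι] [CommRing R]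

theorem det_fiberMask (f : ι → α) (A : Matrix ι ι R) :
    (fiberMask f A).det = ∑ σ : Perm ι,
      if ∀ i, f (σ i) = f i then Perm.sign σ • ∏ i, A (σ i) i else 0 := by
  simp only [det_apply, fiberMask, of_apply, prod_ite_zero, mem_univ, true_implies, smul_ite,
    smul_zero]

theorem prod_det_submatrix_fiber [Fintype α] (f : ι → α) (A : Matrix ι ι R) :
    ∏ c, (A.submatrix (Subtype.val : {i // f i = c} → ι) Subtype.val).det
      = (fiberMask f A).det := by
  let : LinearOrder α := LinearOrder.lift' _ (Fintype.equivFin α).injective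
  rw [(blockTriangular_fiberMask f A).det_fintype]
  refine prod_congr rfl fun c _ => congrArg det ?_
  ext ⟨i, hi⟩ ⟨j, hj⟩
  simp [toSquareBlock_def, fiberMask, hi, hj]

theorem sum_prod_det_submatrix_fiber [Fintype α] (A : Matrix ι ι R) :
    ∑ f : ι → α, ∏ c, (A.submatrix (Subtype.val : {i // f i = c} → ι) Subtype.val).det
      = ∑ σ : Perm ι,
          Nat.card {f : ι → α // ∀ i, f (σ i) = f i} • Perm.sign σ • ∏ i, A (σ i) i := by
  simp_rw [prod_det_submatrix_fiber, det_fiberMask]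
  rw [sum_comm]
  refine sum_congr rfl fun σ _ => ?_
  rw [sum_ite, sum_const_zero, add_zero, sum_const, Nat.card_eq_fintype_card,
    Fintype.card_subtype]

end Matrix

namespace Equiv.Perm

variable {α : Type*} [Fintype α] [DecidableEq α] (σ : Perm α)

def cycleClass (x : α) : Function.fixedPoints σ ⊕ σ.cycleFactorsFinset :=
  if hx : σ x = x then .inl ⟨x, hx⟩
  else .inr ⟨σ.cycleOf x, cycleOf_mem_cycleFactorsFinset_iff.2 (mem_support.2 hx)⟩

theorem cycleClass_eq_cycleClass_iff {x y : α} :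
    σ.cycleClass x = σ.cycleClass y ↔ σ.SameCycle x y := by
  by_cases hx : σ x = x <;> by_cases hy : σ y = y
  · simp only [cycleClass, hx, hy, dite_true, Sum.inl.injEq, Subtype.ext_iff]
    exact ⟨fun h => h ▸ .refl _ _, fun h => h.eq_of_left hx⟩
  · simpa [cycleClass, hx, hy] using fun h => hy (h.apply_eq_self_iff.1 hx)
  · simpa [cycleClass, hx, hy] using fun h => hx (h.apply_eq_self_iff.2 hy)
  · simp only [cycleClass, hx, hy, dite_false, Sum.inr.injEq, Subtype.mk.injEq]
    refine ⟨fun h => ?_, SameCycle.cycleOf_eq⟩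
    have hy' : y ∈ (σ.cycleOf x).support :=
      h ▸ mem_support_cycleOf_iff.2 ⟨.refl _ _, mem_support.2 hy⟩
    exact (mem_support_cycleOf_iff.1 hy').1

theorem cycleClass_surjective : Function.Surjective σ.cycleClass := by
  rintro (⟨x, hx⟩ | ⟨c, hc⟩)
  · exact ⟨x, by simp [cycleClass, show σ x = x from hx]⟩
  · obtain ⟨x, hxc⟩ := (mem_cycleFactorsFinset_iff.1 hc).1.nonempty_support
    have hx : σ x ≠ x := mem_support.1 (mem_cycleFactorsFinset_support_le hc hxc)
    exact ⟨x, by simp [cycleClass, hx, cycle_is_cycleOf hxc hc]⟩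

theorem nat_card_quotient_sameCycle :
    Nat.card (Quotient (SameCycle.setoid σ))
      = Nat.card (Function.fixedPoints σ) + #σ.cycleFactorsFinset := by
  have hker : Setoid.ker σ.cycleClass = SameCycle.setoid σ :=
    Setoid.ext fun _ _ => σ.cycleClass_eq_cycleClass_iff
  rw [← hker, Nat.card_congr (Setoid.quotientKerEquivOfSurjective _ σ.cycleClass_surjective),
    Nat.card_sum, Nat.card_eq_fintype_card (α := σ.cycleFactorsFinset), Fintype.card_coe]

end Equiv.Perm

section CycleCount

variable {n : ℕ} (σ : Perm (Fin n))

theorem cycleCount_eq_card_fixedPoints_add :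
    cycleCount σ = Nat.card (Function.fixedPoints σ) + #σ.cycleFactorsFinset :=
  σ.nat_card_quotient_sameCycle

theorem cycleCount_le : cycleCount σ ≤ n := by
  simpa [cycleCount] using
    Nat.card_le_card_of_surjective _ (Quotient.mk_surjective (s := sameCycleSetoid σ))

theorem sign_eq_neg_one_pow_sub_cycleCount : Perm.sign σ = (-1) ^ (n - cycleCount σ) := by
  have hfix : Nat.card (Function.fixedPoints σ) = n - #σ.support := by
    rw [Nat.card_eq_fintype_card, Perm.card_fixedPoints, Perm.sum_cycleType, Fintype.card_fin]
  have hk : Multiset.card σ.cycleType = #σ.cycleFactorsFinset := by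
    rw [Perm.cycleType_def, Multiset.card_map]; rfl
  have hle := cycleCount_le σ
  have hs : #σ.support ≤ n := by simpa using card_le_univ σ.support
  rw [cycleCount_eq_card_fixedPoints_add, hfix] at hle ⊢
  rw [Perm.sign_of_cycleType, Perm.sum_cycleType, hk,
    show #σ.support + #σ.cycleFactorsFinset
      = n - (n - #σ.support + #σ.cycleFactorsFinset) + 2 * #σ.cycleFactorsFinset by omega,
    pow_add, pow_mul]
  simp

theorem sameCycleSetoid_le_ker_iff {β : Type*} (f : Fin n → β) :
    sameCycleSetoid σ ≤ Setoid.ker f ↔ ∀ i, f (σ i) = f i := by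
  refine ⟨fun h i => h (Perm.sameCycle_apply_left.2 (.refl σ i)), fun h x y hxy => ?_⟩
  obtain ⟨k, -, rfl⟩ := hxy.exists_nat_pow_eq
  have hsemi : Function.Semiconj f σ id := h
  simpa [Perm.coe_pow] using (hsemi.iterate_right k x).symm

theorem card_invariant_fun_eq_pow_cycleCount (β : Type*) :
    Nat.card {f : Fin n → β // ∀ i, f (σ i) = f i} = Nat.card β ^ cycleCount σ := by
  rw [Nat.card_congr ((subtypeEquivRight fun f => (sameCycleSetoid_le_ker_iff σ f).symm).trans
    (Setoid.liftEquiv _)), Nat.card_fun, cycleCount]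

end CycleCount

/-- Superposition identity: the sum over all colourings `f : {1,…,n} → {1,…,m}` of the products of
principal minors `det (A[f⁻¹(c)])` equals `∑_σ (-1)^(n-m(σ)) m^(m(σ)) ∏_i A_{σ(i),i}`; over `ℝ`
the latter equals `m^n · det_{-1/m} A`. -/
theorem sum_colourings_principal_minors {R : Type*} [CommRing R] (m n : ℕ) (hm : 1 ≤ m)
    (A : Matrix (Fin n) (Fin n) R) :
    (∑ f : Fin n → Fin m, ∏ c : Fin m,
        (A.submatrix (fun x : {i : Fin n // f i = c} => (x : Fin n))
          (fun x : {i : Fin n // f i = c} => (x : Fin n))).det)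
      = ∑ σ : Equiv.Perm (Fin n),
          (-1 : R) ^ (n - cycleCount σ) * (m : R) ^ (cycleCount σ) * ∏ i, A (σ i) i ∧
    ∀ B : Matrix (Fin n) (Fin n) ℝ,
      (∑ σ : Equiv.Perm (Fin n),
          (-1 : ℝ) ^ (n - cycleCount σ) * (m : ℝ) ^ (cycleCount σ) * ∏ i, B (σ i) i)
        = (m : ℝ) ^ n * adet (-(1 / (m : ℝ))) B := by
  refine ⟨?_, fun B => ?_⟩
  · rw [A.sum_prod_det_submatrix_fiber]
    refine sum_congr rfl fun σ _ => ?_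
    rw [card_invariant_fun_eq_pow_cycleCount, Nat.card_eq_fintype_card, Fintype.card_fin,
      sign_eq_neg_one_pow_sub_cycleCount, Units.smul_def, nsmul_eq_mul]
    push_cast
    ring
  · rw [adet, mul_sum]
    refine sum_congr rfl fun σ _ => ?_
    have : (m : ℝ) ≠ 0 := by positivity
    rw [← pow_mul_pow_sub (m : ℝ) (cycleCount_le σ), ← neg_div, div_pow]
    field_simp
end

section
/- For every k ∈ ℕ, the Hermite wavefunction ψ_k is a smooth function on ℝ satisfying the Schrödinger equation of the harmonic oscillator: −ψ_k''(x) + (x²/4) ψ_k(x) = (k + 1/2) ψ_k(x) for all x ∈ ℝ. -/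
/-- The `k`-th probabilists' Hermite polynomial (as a function), via the Rodrigues formula
`He_k(x) = (-1)^k e^{x²/2} (d/dx)^k e^{-x²/2}`. -/
noncomputable def hermiteHe (k : ℕ) (x : ℝ) : ℝ :=
  (-1) ^ k * Real.exp (x ^ 2 / 2) * iteratedDeriv k (fun t => Real.exp (-t ^ 2 / 2)) x

/-- The `k`-th Hermite wavefunction `ψ_k(x) = He_k(x) e^{-x²/4} / √(√(2π) k!)`. -/
noncomputable def hermitePsi (k : ℕ) (x : ℝ) : ℝ :=
  hermiteHe k x * Real.exp (-x ^ 2 / 4) / Real.sqrt (Real.sqrt (2 * Real.pi) * k.factorial)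

open Polynomial

/-- Real probabilists' Hermite polynomials. -/
noncomputable def Herm : ℕ → ℝ[X]
  | 0 => 1
  | n + 1 => X * Herm n - derivative (Herm n)

lemma Herm_succ (n : ℕ) : Herm (n + 1) = X * Herm n - derivative (Herm n) := rfl

lemma contDiff_eval (p : ℝ[X]) : ContDiff ℝ (⊤ : ℕ∞) fun x => p.eval x := by
  induction p using Polynomial.induction_on' with
  | add p q hp hq => simpa using hp.add hq
  | monomial n a =>
    simp only [Polynomial.eval_monomial]
    exact (contDiff_id.pow n).const_smul a

lemma derivative_Herm (n : ℕ) :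
    derivative (Herm (n + 1)) = C ((n : ℝ) + 1) * Herm n := by
  induction n with
  | zero => simp [Herm]
  | succ n ih =>
    rw [Herm_succ (n+1), derivative_sub, derivative_mul, derivative_X, one_mul, ih,
      derivative_mul, derivative_C, zero_mul, zero_add, Herm_succ n]
    push_cast
    simp only [map_add, map_one]
    ring

lemma Herm_ode (k : ℕ) :
    derivative (derivative (Herm k)) = X * derivative (Herm k) - C (k : ℝ) * Herm k := by
  have h := derivative_Herm k
  rw [Herm_succ k, derivative_sub, derivative_mul, derivative_X, one_mul] at h
  have hca : C ((k : ℝ) + 1) = C (k : ℝ) + 1 := by simp [map_add]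
  rw [hca] at h
  linear_combination -h

lemma hasDerivAt_polyexp (P : ℝ[X]) (a x : ℝ) :
    HasDerivAt (fun t => P.eval t * Real.exp (-t ^ 2 / a))
      ((P.derivative.eval x - 2 * x / a * P.eval x) * Real.exp (-x ^ 2 / a)) x := by
  have h1 : HasDerivAt (fun t : ℝ => -t ^ 2 / a) (-(2 * x) / a) x := by
    simpa using ((hasDerivAt_pow 2 x).neg.div_const a)
  have h2 : HasDerivAt (fun t : ℝ => Real.exp (-t ^ 2 / a))
      (Real.exp (-x ^ 2 / a) * (-(2 * x) / a)) x :=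
    (Real.hasDerivAt_exp _).comp x h1
  have := ((P.hasDerivAt x).mul h2 : HasDerivAt (fun t => P.eval t * Real.exp (-t ^ 2 / a)) _ x)
  refine this.congr_deriv ?_
  ring

lemma rodrigues (k : ℕ) (x : ℝ) :
    iteratedDeriv k (fun t => Real.exp (-t ^ 2 / 2)) x
      = (-1) ^ k * ((Herm k).eval x * Real.exp (-x ^ 2 / 2)) := by
  induction k generalizing x with
  | zero => simp [Herm]
  | succ k ih =>
    rw [iteratedDeriv_succ]
    have hfun : iteratedDeriv k (fun t => Real.exp (-t ^ 2 / 2))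
        = fun x => (-1) ^ k * ((Herm k).eval x * Real.exp (-x ^ 2 / 2)) := funext ih
    rw [hfun]
    have h := ((hasDerivAt_polyexp (Herm k) 2 x).const_mul ((-1 : ℝ) ^ k)).deriv
    rw [h, Herm_succ k]
    simp only [eval_sub, eval_mul, eval_X]
    ring

lemma hermiteHe_eq (k : ℕ) (x : ℝ) : hermiteHe k x = (Herm k).eval x := by
  rw [hermiteHe, rodrigues]
  have he : Real.exp (x ^ 2 / 2) * Real.exp (-x ^ 2 / 2) = 1 := by
    rw [← Real.exp_add, show x ^ 2 / 2 + -x ^ 2 / 2 = 0 by ring, Real.exp_zero]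
  have hs : ((-1 : ℝ)) ^ k * (-1) ^ k = 1 := by
    rw [← mul_pow]; norm_num
  calc (-1) ^ k * Real.exp (x ^ 2 / 2) * ((-1) ^ k * ((Herm k).eval x * Real.exp (-x ^ 2 / 2)))
      = ((-1 : ℝ) ^ k * (-1) ^ k) * (Real.exp (x ^ 2 / 2) * Real.exp (-x ^ 2 / 2))
        * (Herm k).eval x := by ring
    _ = (Herm k).eval x := by rw [he, hs]; ring

lemma hermitePsi_eq (k : ℕ) : hermitePsi k
    = fun x => (Herm k).eval x * Real.exp (-x ^ 2 / 4)
        / Real.sqrt (Real.sqrt (2 * Real.pi) * k.factorial) := by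
  funext x; rw [hermitePsi, hermiteHe_eq]

/-- `ψ_k` is smooth and satisfies the harmonic-oscillator Schrödinger equation
`-ψ_k(x) + (x²/4) ψ_k(x) = (k + 1/2) ψ_k(x)`. -/
theorem hermitePsi_schrodinger (k : ℕ) :
    ContDiff ℝ (⊤ : ℕ∞) (hermitePsi k) ∧
    ∀ x : ℝ, -(deriv (deriv (hermitePsi k)) x) + (x ^ 2 / 4) * hermitePsi k x
      = ((k : ℝ) + 1 / 2) * hermitePsi k x := by
  set c := Real.sqrt (Real.sqrt (2 * Real.pi) * k.factorial) with hc
  set D : ℝ[X] → ℝ[X] := fun P => P.derivative - C (1/2 : ℝ) * X * P with hD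
  have hpsi : hermitePsi k = fun x => (Herm k).eval x * Real.exp (-x ^ 2 / 4) / c :=
    hermitePsi_eq k
  have key : ∀ (P : ℝ[X]),
      deriv (fun x => P.eval x * Real.exp (-x ^ 2 / 4) / c)
        = fun x => (D P).eval x * Real.exp (-x ^ 2 / 4) / c := by
    intro P
    funext x
    have h := ((hasDerivAt_polyexp P 4 x).div_const c).deriv
    rw [h, hD]
    simp only [eval_sub, eval_mul, eval_C, eval_X]
    ring
  constructor
  · rw [hpsi]
    exact ((contDiff_eval (Herm k)).mul
      (Real.contDiff_exp.comp ((contDiff_id.pow 2).neg.div_const 4))).div_const c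
  · intro x
    rw [hpsi, key, key]
    have hODE := Herm_ode k
    have hODEx : (derivative (derivative (Herm k))).eval x
        = x * (derivative (Herm k)).eval x - (k : ℝ) * (Herm k).eval x := by
      rw [hODE]; simp
    have hexp : (D (D (Herm k))).eval x
        = -(k : ℝ) * (Herm k).eval x - (1/2) * (Herm k).eval x
          + x ^ 2 / 4 * (Herm k).eval x := by
      simp only [hD, derivative_sub, derivative_mul, derivative_C, derivative_X,
        eval_sub, eval_mul, eval_add, eval_C, eval_X, eval_one, zero_mul, one_mul, zero_add]
      linear_combination hODEx
    beta_reduce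
    rw [hexp]
    ring
end

section
/- The Hermite wavefunctions are orthonormal in L²(ℝ): for all j, k ∈ ℕ, ∫_ℝ ψ_j(x) ψ_k(x) dx = 1 if j = k and 0 otherwise. -/
open MeasureTheory

/-!
Integrating by parts against the Gaussian weight `e^{-x²/2}`, using
`(He_n e^{-x²/2})' = -He_{n+1} e^{-x²/2}`, moves all `n` derivatives onto the other factor:
`∫ p He_n e^{-x²/2} = ∫ p⁽ⁿ⁾ e^{-x²/2}` for every polynomial `p`. Since `He_j` is monic of
degree `j`, its `k`-th derivative vanishes for `j < k` and equals `k!` for `j = k`, and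
`∫ e^{-x²/2} = √(2π)`.
-/

open Polynomial Real Nat

namespace Polynomial

theorem iterate_derivative_natDegree {R : Type*} [Semiring R] (p : R[X]) :
    derivative^[p.natDegree] p = C (p.natDegree ! • p.leadingCoeff) := by
  rw [eq_C_of_natDegree_eq_zero (p := derivative^[p.natDegree] p)
      (by simpa using natDegree_iterate_derivative p p.natDegree),
    coeff_iterate_derivative, zero_add, descFactorial_self, leadingCoeff]

theorem iterate_derivative_hermite_self (n : ℕ) : derivative^[n] (hermite n) = C (n ! : ℤ) := by
  simpa [natDegree_hermite, leadingCoeff_hermite] using iterate_derivative_natDegree (hermite n)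

theorem integrable_eval_mul_exp_neg_mul_sq {b : ℝ} (hb : 0 < b) (p : ℝ[X]) :
    Integrable fun x : ℝ => p.eval x * exp (-b * x ^ 2) := by
  simp_rw [eval_eq_sum_range, Finset.sum_mul]
  refine integrable_finsetSum _ fun i _ => ?_
  have hmonomial := (integrable_rpow_mul_exp_neg_mul_sq hb (s := i)
    (neg_one_lt_zero.trans_le i.cast_nonneg)).const_mul (p.coeff i)
  simpa only [rpow_natCast, mul_assoc] using hmonomial

theorem integrable_eval_mul_aeval_mul_gaussian (p : ℝ[X]) (q : ℤ[X]) :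
    Integrable fun x : ℝ => p.eval x * (aeval x q * exp (-(x ^ 2 / 2))) := by
  have h := integrable_eval_mul_exp_neg_mul_sq (b := 1 / 2) (by norm_num)
    (p * q.map (algebraMap ℤ ℝ))
  refine h.congr (Filter.Eventually.of_forall fun x => ?_)
  simp only [eval_mul, eval_map_algebraMap]
  ring_nf

theorem hasDerivAt_aeval_hermite_mul_gaussian (n : ℕ) (x : ℝ) :
    HasDerivAt (fun y => aeval y (hermite n) * exp (-(y ^ 2 / 2)))
      (-(aeval x (hermite (n + 1)) * exp (-(x ^ 2 / 2)))) x := by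
  have hgauss : HasDerivAt (fun y : ℝ => exp (-(y ^ 2 / 2))) (exp (-(x ^ 2 / 2)) * -x) x := by
    simpa using ((hasDerivAt_pow 2 x).div_const 2).neg.exp
  refine ((hermite n).hasDerivAt_aeval x |>.mul hgauss).congr_deriv ?_
  rw [hermite_succ, map_sub, map_mul, aeval_X]
  ring

theorem integral_eval_mul_hermite_succ_mul_gaussian (p : ℝ[X]) (n : ℕ) :
    ∫ x, p.eval x * (aeval x (hermite (n + 1)) * exp (-(x ^ 2 / 2))) =
      ∫ x, p.derivative.eval x * (aeval x (hermite n) * exp (-(x ^ 2 / 2))) := by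
  have hparts := integral_mul_deriv_eq_deriv_mul_of_integrable
    (fun x _ => p.hasDerivAt x) (fun x _ => hasDerivAt_aeval_hermite_mul_gaussian n x)
    ((integrable_eval_mul_aeval_mul_gaussian p (hermite (n + 1))).neg.congr
      (.of_forall fun x => by simp))
    (integrable_eval_mul_aeval_mul_gaussian p.derivative (hermite n))
    (integrable_eval_mul_aeval_mul_gaussian p (hermite n))
  simpa only [mul_neg, integral_neg, neg_inj] using hparts

theorem integral_eval_mul_hermite_mul_gaussian (p : ℝ[X]) (n : ℕ) :
    ∫ x, p.eval x * (aeval x (hermite n) * exp (-(x ^ 2 / 2))) =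
      ∫ x, (derivative^[n] p).eval x * exp (-(x ^ 2 / 2)) := by
  induction n generalizing p with
  | zero => simp [hermite_zero]
  | succ n ih =>
    rw [integral_eval_mul_hermite_succ_mul_gaussian, ih, Function.iterate_succ_apply]

theorem integral_hermite_mul_hermite_mul_gaussian (j k : ℕ) :
    ∫ x, aeval x (hermite j) * aeval x (hermite k) * exp (-(x ^ 2 / 2)) =
      if j = k then √(2 * π) * k ! else 0 := by
  wlog hjk : j ≤ k generalizing j k
  · simp_rw [mul_comm (aeval _ (hermite j)), this k j (le_of_not_ge hjk)]
    rcases eq_or_ne j k with rfl | hne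
    · rfl
    · rw [if_neg hne, if_neg hne.symm]
  simp_rw [← eval_map_algebraMap (hermite j), mul_assoc, integral_eval_mul_hermite_mul_gaussian,
    iterate_derivative_map]
  rcases hjk.lt_or_eq with hlt | rfl
  · rw [iterate_derivative_eq_zero (natDegree_hermite.trans_lt hlt), if_neg hlt.ne]
    simp
  · have hgauss : ∫ x : ℝ, exp (-(x ^ 2 / 2)) = √(2 * π) := by
      simpa [div_eq_inv_mul, neg_mul] using integral_gaussian (1 / 2)
    simp [iterate_derivative_hermite_self, integral_const_mul, hgauss, mul_comm]

end Polynomial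

theorem hermiteHe_eq_aeval_hermite (k : ℕ) (x : ℝ) : hermiteHe k x = aeval x (hermite k) := by
  simp_rw [hermiteHe, hermite_eq_deriv_gaussian', iteratedDeriv_eq_iterate, neg_div]
  ring

/-- The Hermite wavefunctions are orthonormal in `L²(ℝ)`. -/
theorem hermitePsi_orthonormal (j k : ℕ) :
    ∫ x : ℝ, hermitePsi j x * hermitePsi k x = if j = k then 1 else 0 := by
  have hψ (x : ℝ) : hermitePsi j x * hermitePsi k x =
      aeval x (hermite j) * aeval x (hermite k) * exp (-(x ^ 2 / 2)) /
        (√(√(2 * π) * j !) * √(√(2 * π) * k !)) := by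
    have hsplit : exp (-(x ^ 2 / 2)) = exp (-x ^ 2 / 4) * exp (-x ^ 2 / 4) := by
      rw [← exp_add]; ring_nf
    simp only [hermitePsi, hermiteHe_eq_aeval_hermite, hsplit]
    ring
  simp_rw [hψ, integral_div, integral_hermite_mul_hermite_mul_gaussian]
  split_ifs with hjk
  · subst hjk
    rw [mul_self_sqrt (by positivity), div_self (by positivity)]
  · exact zero_div _
end

section
/- Cycle lemma for B − 1 frequencies plus a half block (odd type): let n ≥ 1, B ≥ 1, let σ ∈ S_n have m(σ) cycles, and let ω_1, …, ω_{B−1} : ℕ → ℝ be sequences such that ω_j(t) → ∞ for every j and |ω_j(t) − ω_k(t)| → ∞ for all j ≠ k, as t → ∞. Then for every bounded measurable f : ℝⁿ → ℝ with compact support, lim_{t → ∞} ∫_{ℝⁿ} ( ∏_{i=1}^n (2/(2B−1)) ( 1/2 + ∑_{j=1}^{B−1} cos(ω_j(t)(x_{σ(i)} − x_i)) ) ) f(x) dx = (1/(2B−1))^{n − m(σ)} ∫_{ℝⁿ} f(x) dx. -/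
/-!
Write `1/2 + ∑ⱼ cos (ωⱼ θ) = ½ ∑ₛ exp (i νₛ θ)`, where `s` runs over the `2B − 1` signed
frequencies `νₛ ∈ {0, ±ω₁, …, ±ω_{B−1}}`. The integrand becomes `(2B − 1)⁻ⁿ` times a sum, over
labellings `g` of the coordinates by signed frequencies, of
`exp (i ∑ᵢ ν_{g i} (x_{σ i} − x_i)) f x`. If `g` is constant on the cycles of `σ`, the phase
vanishes identically. Otherwise `g (σ i) ≠ g i` for some `i`; the coefficient of `x_{σ i}` in
the phase is then `ν_{g i} − ν_{g (σ i)}`, which diverges because distinct signed frequencies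
separate, so the term tends to `0` by the Riemann–Lebesgue lemma. The labellings constant on
cycles are the functions on the `m(σ)` cycles, and there are `(2B − 1)^{m(σ)}` of them.
-/

open Filter MeasureTheory

open Topology Real

theorem tendsto_integral_exp_sum_mul_smul {α ι E : Type*} [Fintype ι] [NormedAddCommGroup E]
    [NormedSpace ℂ E] {l : Filter α} (c : α → ι → ℝ) {k : ι}
    (hc : Tendsto (fun t => |c t k|) l atTop) (f : (ι → ℝ) → E) :
    Tendsto (fun t => ∫ x, Complex.exp (↑(∑ i, c t i * x i) * Complex.I) • f x) l (𝓝 0) := by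
  classical
  let w : α → StrongDual ℝ (ι → ℝ) := fun t =>
    ∑ i, (-c t i / (2 * π)) • ContinuousLinearMap.proj i
  have hw : ∀ t x, w t x = -(∑ i, c t i * x i) / (2 * π) := fun t x => by
    simp [w, Finset.sum_div, ← Finset.sum_neg_distrib, neg_div, mul_div_right_comm]
  have hnorm : ∀ t, |c t k| / (2 * π) ≤ ‖w t‖ := fun t => by
    simpa [hw, Finset.sum_eq_single k, Pi.single_apply, Pi.norm_single, abs_div, abs_of_pos pi_pos]
      using (w t).le_opNorm (Pi.single k 1)
  have hw_cocompact : Tendsto w l (cocompact _) := by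
    rw [← Metric.cobounded_eq_cocompact, ← tendsto_norm_atTop_iff_cobounded]
    exact tendsto_atTop_mono hnorm (hc.atTop_div_const (by positivity))
  refine ((tendsto_integral_exp_smul_cocompact f volume).comp hw_cocompact).congr fun t =>
    integral_congr_ae (ae_of_all _ fun x => ?_)
  simp only [Circle.smul_def, Real.fourierChar_apply, hw]
  congr 3
  push_cast
  field_simp

theorem prod_sum_exp_mul_I {ι S : Type*} [Fintype ι] [DecidableEq ι] [Fintype S] (ν : S → ℝ)
    (θ : ι → ℝ) :
    ∏ i, ∑ s, Complex.exp (↑(ν s * θ i) * Complex.I)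
      = ∑ g : ι → S, Complex.exp (↑(∑ i, ν (g i) * θ i) * Complex.I) := by
  rw [Finset.prod_univ_sum, Fintype.piFinset_univ]
  push_cast
  simp [Finset.sum_mul, Complex.exp_sum]

namespace Equiv.Perm

theorem SameCycle.eq_of_forall_apply_eq {α β : Type*} [Finite α] {σ : Perm α} {g : α → β}
    (hg : ∀ i, g (σ i) = g i) {i j : α} (h : σ.SameCycle i j) : g i = g j := by
  obtain ⟨p, -, rfl⟩ := h.exists_pow_eq'
  rw [coe_pow]
  exact (congrFun (Function.iterate_invariant (funext hg) p) i).symm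

section

variable {ι S : Type*} [Fintype ι] (σ : Perm ι)

theorem sum_mul_apply_sub {R : Type*} [CommRing R] (a x : ι → R) :
    ∑ i, a i * (x (σ i) - x i) = ∑ i, (a (σ⁻¹ i) - a i) * x i := by
  simp only [mul_sub, sub_mul, Finset.sum_sub_distrib]
  rw [← Equiv.sum_comp σ fun i => a (σ⁻¹ i) * x i]
  simp

theorem sum_mul_apply_sub_eq_zero {R : Type*} [CommRing R] {g : ι → S}
    (hg : ∀ i, g (σ i) = g i) (ν : S → R) (x : ι → R) :
    ∑ i, ν (g i) * (x (σ i) - x i) = 0 := by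
  rw [sum_mul_apply_sub]
  refine Finset.sum_eq_zero fun i _ => ?_
  simp [← hg (σ.symm i)]

variable {α E : Type*} [NormedAddCommGroup E] [NormedSpace ℂ E] {l : Filter α}

theorem tendsto_integral_exp_sum_mul_apply_sub_smul (ν : α → S → ℝ)
    (hν : ∀ a b, a ≠ b → Tendsto (fun t => |ν t a - ν t b|) l atTop) (g : ι → S)
    (f : (ι → ℝ) → E) [Decidable (∀ i, g (σ i) = g i)] :
    Tendsto (fun t => ∫ x, Complex.exp (↑(∑ i, ν t (g i) * (x (σ i) - x i)) * Complex.I) • f x)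
      l (𝓝 (if ∀ i, g (σ i) = g i then ∫ x, f x else 0)) := by
  split_ifs with hg
  · simpa [sum_mul_apply_sub_eq_zero σ hg] using tendsto_const_nhds
  · push Not at hg
    obtain ⟨i, hi⟩ := hg
    simp_rw [sum_mul_apply_sub σ (fun i => ν _ (g i))]
    refine tendsto_integral_exp_sum_mul_smul _ (k := σ i) ?_ f
    simpa using hν _ _ (Ne.symm hi)

theorem tendsto_integral_prod_sum_exp_smul [Fintype S] (ν : α → S → ℝ)
    (hν : ∀ a b, a ≠ b → Tendsto (fun t => |ν t a - ν t b|) l atTop) {f : (ι → ℝ) → E}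
    (hf : Integrable f) :
    Tendsto (fun t => ∫ x, (∏ i, ∑ s, Complex.exp (↑(ν t s * (x (σ i) - x i)) * Complex.I)) • f x)
      l (𝓝 (Nat.card {g : ι → S // ∀ i, g (σ i) = g i} • ∫ x, f x)) := by
  classical
  have hint : ∀ t (g : ι → S), Integrable fun x =>
      Complex.exp (↑(∑ i, ν t (g i) * (x (σ i) - x i)) * Complex.I) • f x := fun t g =>
    hf.bdd_smul 1 (by fun_prop) (ae_of_all _ fun x => by simp [Complex.norm_exp])
  have hsum := tendsto_finsetSum Finset.univ fun g _ =>
    tendsto_integral_exp_sum_mul_apply_sub_smul σ ν hν g f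
  rw [Finset.sum_ite, Finset.sum_const_zero, add_zero, Finset.sum_const,
    ← Fintype.card_subtype, ← Nat.card_eq_fintype_card] at hsum
  refine hsum.congr fun t => ?_
  simp_rw [prod_sum_exp_mul_I, Finset.sum_smul]
  exact (integral_finsetSum _ fun g _ => hint t g).symm

end

variable {n : ℕ} (σ : Perm (Fin n))

def invariantFunEquiv (S : Type*) :
    {g : Fin n → S // ∀ i, g (σ i) = g i} ≃ (Quotient (sameCycleSetoid σ) → S) where
  toFun g := Quotient.lift g.1 fun _ _ => SameCycle.eq_of_forall_apply_eq g.2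
  invFun h := ⟨fun i => h (Quotient.mk _ i),
    fun i => congrArg h (Quotient.sound (SameCycle.refl σ i).apply_left)⟩
  left_inv _ := rfl
  right_inv _ := funext fun q => Quotient.inductionOn q fun _ => rfl

theorem card_invariantFun (S : Type*) :
    Nat.card {g : Fin n → S // ∀ i, g (σ i) = g i} = Nat.card S ^ cycleCount σ := by
  rw [Nat.card_congr (invariantFunEquiv σ S), Nat.card_fun, cycleCount]

theorem cycleCount_le : cycleCount σ ≤ n := by
  simpa [cycleCount] using
    Nat.card_le_card_of_surjective _ (Quotient.mk_surjective (s := sameCycleSetoid σ))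

end Equiv.Perm

def signedFreq {J : Type*} (ω : J → ℝ) : Option (J × Bool) → ℝ
  | none => 0
  | some (j, b) => if b then ω j else -ω j

theorem tendsto_abs_signedFreq_sub {J α : Type*} {l : Filter α} {ω : J → α → ℝ}
    (hω : ∀ j, Tendsto (ω j) l atTop)
    (hsep : ∀ j k, j ≠ k → Tendsto (fun t => |ω j t - ω k t|) l atTop)
    {a b : Option (J × Bool)} (hab : a ≠ b) :
    Tendsto (fun t => |signedFreq (ω · t) a - signedFreq (ω · t) b|) l atTop := by
  have hone j : Tendsto (fun t => |ω j t|) l atTop := tendsto_abs_atTop_atTop.comp (hω j)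
  have hadd j k : Tendsto (fun t => |ω j t + ω k t|) l atTop :=
    tendsto_abs_atTop_atTop.comp ((hω j).atTop_add_atTop (hω k))
  -- up to sign, the difference is `ω j`, `ω j + ω k`, or `ω j - ω k` with `j ≠ k`
  rcases a with _ | ⟨j, _ | _⟩ <;> rcases b with _ | ⟨k, _ | _⟩ <;>
    simp only [signedFreq, ne_eq, Option.some.injEq, Prod.mk.injEq, reduceCtorEq, and_true,
      and_false, not_false_eq_true, not_true_eq_false, Bool.false_eq_true, if_true, if_false,
      zero_sub, sub_zero, zero_add, abs_neg, sub_neg_eq_add, ← neg_add', neg_add_eq_sub] at hab ⊢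
  all_goals first
    | exact hone _ | exact hadd _ _ | exact hsep _ _ hab | exact hsep _ _ (Ne.symm hab)

section

variable {J : Type*} [Fintype J]

theorem half_add_sum_cos_eq (ω : J → ℝ) (θ : ℝ) :
    ((1 / 2 + ∑ j, Real.cos (ω j * θ) : ℝ) : ℂ)
      = 2⁻¹ * ∑ s, Complex.exp (↑(signedFreq ω s * θ) * Complex.I) := by
  simp only [Fintype.sum_option, Fintype.sum_prod_type, Fintype.sum_bool, signedFreq]
  push_cast
  simp only [Complex.cos]
  rw [mul_add, Finset.mul_sum]
  congr 1
  · simp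
  · exact Finset.sum_congr rfl fun j _ => by simp only [neg_mul]; ring

theorem ofReal_prod_two_div_mul_half_add_sum_cos {ι : Type*} [Fintype ι] (c : ℝ) (ω : J → ℝ)
    (θ : ι → ℝ) :
    ((∏ i, 2 / c * (1 / 2 + ∑ j, Real.cos (ω j * θ i)) : ℝ) : ℂ)
      = (c : ℂ)⁻¹ ^ Fintype.card ι *
        ∏ i, ∑ s, Complex.exp (↑(signedFreq ω s * θ i) * Complex.I) := by
  have hc : ((2 / c : ℝ) : ℂ) * 2⁻¹ = (c : ℂ)⁻¹ := by push_cast; ring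
  simp only [Complex.ofReal_prod, Complex.ofReal_mul, half_add_sum_cos_eq, ← mul_assoc, hc]
  rw [Finset.prod_mul_distrib, Finset.prod_const, Finset.card_univ]

end

theorem cycle_lemma_odd_type_general (n B : ℕ) (hB : 1 ≤ B)
    (σ : Equiv.Perm (Fin n)) (ω : Fin (B - 1) → ℕ → ℝ)
    (hω : ∀ j, Tendsto (ω j) atTop atTop)
    (hsep : ∀ j k, j ≠ k → Tendsto (fun t => |ω j t - ω k t|) atTop atTop)
    (f : (Fin n → ℝ) → ℝ) (hmeas : Measurable f) (hbd : ∃ C : ℝ, ∀ x, |f x| ≤ C)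
    (hsupp : HasCompactSupport f) :
    Tendsto (fun t : ℕ =>
        ∫ x : Fin n → ℝ,
          (∏ i, (2 / (2 * (B : ℝ) - 1)) *
            (1 / 2 + ∑ j : Fin (B - 1), Real.cos (ω j t * (x (σ i) - x i)))) * f x)
      atTop
      (nhds ((1 / (2 * (B : ℝ) - 1)) ^ (n - cycleCount σ) * ∫ x : Fin n → ℝ, f x)) := by
  have hd : (2 * (B : ℂ) - 1) ≠ 0 := by
    rw [sub_ne_zero]
    norm_cast
    omega
  have hf : Integrable fun x => (f x : ℂ) := by
    obtain ⟨C, hC⟩ := hbd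
    exact (memLp_one_iff_integrable.mp
      (hsupp.memLp_of_bound hmeas.aestronglyMeasurable C (ae_of_all _ hC))).ofReal
  have hcard : (Nat.card {g : Fin n → Option (Fin (B - 1) × Bool) // ∀ i, g (σ i) = g i} : ℂ)
      = (2 * B - 1) ^ cycleCount σ := by
    rw [Equiv.Perm.card_invariantFun, Nat.card_eq_fintype_card]
    simp only [Fintype.card_option, Fintype.card_prod, Fintype.card_fin, Fintype.card_bool]
    push_cast [hB]
    ring
  have hlim := σ.tendsto_integral_prod_sum_exp_smul (fun t => signedFreq (ω · t))
    (fun _ _ => tendsto_abs_signedFreq_sub hω hsep) hf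
  rw [← tendsto_ofReal_iff]
  convert hlim.const_mul ((2 * (B : ℂ) - 1)⁻¹ ^ n) using 1
  · funext t
    rw [← integral_complex_ofReal, ← integral_const_mul]
    congr 1
    funext x
    rw [Complex.ofReal_mul, ofReal_prod_two_div_mul_half_add_sum_cos]
    push_cast
    simp [smul_eq_mul, mul_assoc]
  · congr 1
    rw [nsmul_eq_mul, hcard, integral_complex_ofReal]
    push_cast
    rw [one_div, pow_sub₀ _ (inv_ne_zero hd) σ.cycleCount_le]
    simp only [inv_pow, inv_inv]
    ring

/-- Cycle lemma for `B − 1` frequencies plus a half block (odd type): if `ω_j(t) → ∞` and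
`|ω_j(t) − ω_k(t)| → ∞` for `j ≠ k`, then for bounded, measurable, compactly supported `f`,
`∫ (∏ i (2/(2B−1)) (1/2 + ∑_j cos(ω_j(t)(x_{σ(i)} − x_i)))) f(x) dx
  → (1/(2B−1))^(n − m(σ)) ∫ f(x) dx`. -/
theorem cycle_lemma_odd_type (n B : ℕ) (hn : 1 ≤ n) (hB : 1 ≤ B)
    (σ : Equiv.Perm (Fin n)) (ω : Fin (B - 1) → ℕ → ℝ)
    (hω : ∀ j, Tendsto (ω j) atTop atTop)
    (hsep : ∀ j k, j ≠ k → Tendsto (fun t => |ω j t - ω k t|) atTop atTop)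
    (f : (Fin n → ℝ) → ℝ) (hmeas : Measurable f) (hbd : ∃ C : ℝ, ∀ x, |f x| ≤ C)
    (hsupp : HasCompactSupport f) :
    Tendsto (fun t : ℕ =>
        ∫ x : Fin n → ℝ,
          (∏ i, (2 / (2 * (B : ℝ) - 1)) *
            (1 / 2 + ∑ j : Fin (B - 1), Real.cos (ω j t * (x (σ i) - x i)))) * f x)
      atTop
      (nhds ((1 / (2 * (B : ℝ) - 1)) ^ (n - cycleCount σ) * ∫ x : Fin n → ℝ, f x)) :=
  cycle_lemma_odd_type_general n B hB σ ω hω hsep f hmeas hbd hsupp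
end
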